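/- arXiv:2509.07952 — 2 statements merged into one kernel-verified Lean document; each statement's English description precedes it below -/
import Mathlib

section
/- Let ψ : ℕ → (ℝ → ℝ) be functions with ‖ψ_k‖_∞ ≤ Ψ₀ and ‖ψ_k'‖_∞ ≤ Ψ₁ · k^δ for all k ≥ 1 (some constants Ψ₀, Ψ₁, δ ≥ 0), and suppose each ψ_k is continuously differentiable and ∫₀¹ ψ_k ψ_ℓ = δ_{kℓ}. Then for every λ > 1 + 2δ there is a constant C such that for all n, p and all k, ℓ ≤ p, |∑_{j=1}^n ψ_k(j/n) ψ_ℓ(j/n) − n·δ_{kℓ}| ≤ C · (k^λ + ℓ^λ)/2. In particular, for any u ∈ ℝ^p, |uᵀ(Ψ − n I)u| ≤ C ∑_k k^λ u_k², where Ψ_{kℓ} = ∑_j ψ_k(j/n)ψ_ℓ(j/n). -/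
open MeasureTheory Finset

/-! Each entry `∑ⱼ ψₖ(j/n) ψₗ(j/n)` is `n` times a right-endpoint Riemann sum of
`∫₀¹ ψₖ ψₗ = δₖₗ`. The product has derivative bounded by `Ψ₀Ψ₁(k^δ + ℓ^δ)`, so by the mean value
theorem each of the `n` cells contributes an error at most that bound over `n²`, whence
`|Ψₖₗ - n δₖₗ| ≤ Ψ₀Ψ₁(k^δ + ℓ^δ) ≤ 2Ψ₀Ψ₁ k^δ ℓ^δ`. The quadratic form is then at most
`2Ψ₀Ψ₁ (∑ k^δ |uₖ|)²`, and Cauchy–Schwarz with weights `k^λ` bounds this by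
`2Ψ₀Ψ₁ (∑ k^(2δ-λ)) ∑ k^λ uₖ²`; the first sum converges because `λ > 1 + 2δ`. -/

theorem abs_mul_sub_integral_le_of_abs_deriv_le {f : ℝ → ℝ} {L a b : ℝ}
    (hf : Differentiable ℝ f) (hf' : ∀ x, |deriv f x| ≤ L) (hab : a ≤ b) :
    |(b - a) * f b - ∫ x in a..b, f x| ≤ L * (b - a) ^ 2 := by
  have hL : 0 ≤ L := (abs_nonneg _).trans (hf' 0)
  have hclose : ∀ x ∈ Set.uIoc a b, ‖f b - f x‖ ≤ L * (b - a) := by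
    intro x hx
    rw [Set.uIoc_of_le hab] at hx
    calc ‖f b - f x‖ ≤ L * ‖b - x‖ :=
          convex_univ.norm_image_sub_le_of_norm_deriv_le (fun y _ => hf y) (fun y _ => hf' y)
            trivial trivial
      _ ≤ L * (b - a) := by
          rw [Real.norm_of_nonneg (by linarith [hx.2])]
          gcongr
          linarith [hx.1]
  calc |(b - a) * f b - ∫ x in a..b, f x| = ‖∫ x in a..b, (f b - f x)‖ := by
        rw [intervalIntegral.integral_sub intervalIntegrable_const
          (hf.continuous.intervalIntegrable _ _), intervalIntegral.integral_const, smul_eq_mul,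
          Real.norm_eq_abs]
    _ ≤ L * (b - a) * |b - a| := intervalIntegral.norm_integral_le_of_norm_le_const hclose
    _ = L * (b - a) ^ 2 := by rw [abs_of_nonneg (sub_nonneg.2 hab)]; ring

theorem abs_riemannSum_sub_integral_le {f : ℝ → ℝ} {L : ℝ} (hf : Differentiable ℝ f)
    (hf' : ∀ x, |deriv f x| ≤ L) (n : ℕ) :
    |∑ j ∈ Icc 1 n, f (j / n) - n * ∫ x in (0:ℝ)..1, f x| ≤ L := by
  have hL : 0 ≤ L := (abs_nonneg _).trans (hf' 0)
  rcases Nat.eq_zero_or_pos n with rfl | hn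
  · simpa using hL
  have hn' : (0:ℝ) < n := Nat.cast_pos.2 hn
  set a : ℕ → ℝ := fun i => i / n with ha
  have hsum : ∑ j ∈ Icc 1 n, f (j / n) = ∑ i ∈ range n, f (a (i + 1)) := by
    rw [← Ico_add_one_right_eq_Icc, sum_Ico_eq_sum_range]
    simp [ha, add_comm]
  have hint : ∫ x in (0:ℝ)..1, f x = ∑ i ∈ range n, ∫ x in a i..a (i + 1), f x := by
    rw [intervalIntegral.sum_integral_adjacent_intervals
      (fun i _ => hf.continuous.intervalIntegrable _ _)]
    simp [ha, hn'.ne']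
  have hstep : ∀ i, |f (a (i + 1)) - n * ∫ x in a i..a (i + 1), f x| ≤ L / n := by
    intro i
    have hlen : a (i + 1) - a i = 1 / n := by simp only [ha]; push_cast; ring
    have h := abs_mul_sub_integral_le_of_abs_deriv_le hf hf' (a := a i) (b := a (i + 1))
      (by linarith [hlen, one_div_pos.2 hn'])
    rw [hlen] at h
    calc |f (a (i + 1)) - n * ∫ x in a i..a (i + 1), f x|
        = n * |1 / n * f (a (i + 1)) - ∫ x in a i..a (i + 1), f x| := by
          rw [← abs_of_pos hn', ← abs_mul, abs_of_pos hn']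
          congr 1
          field_simp
      _ ≤ n * (L * (1 / n) ^ 2) := by gcongr
      _ = L / n := by field_simp
  calc |∑ j ∈ Icc 1 n, f (j / n) - n * ∫ x in (0:ℝ)..1, f x|
      = |∑ i ∈ range n, (f (a (i + 1)) - n * ∫ x in a i..a (i + 1), f x)| := by
        rw [hsum, hint, mul_sum, sum_sub_distrib]
    _ ≤ ∑ _i ∈ range n, L / n := (abs_sum_le_sum_abs _ _).trans (sum_le_sum fun i _ => hstep i)
    _ = L := by rw [sum_const, card_range, nsmul_eq_mul]; field_simp

theorem abs_deriv_mul_le {f g : ℝ → ℝ} {A Bf Bg : ℝ} (hf : Differentiable ℝ f)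
    (hg : Differentiable ℝ g) (hfA : ∀ x, |f x| ≤ A) (hgA : ∀ x, |g x| ≤ A)
    (hf' : ∀ x, |deriv f x| ≤ Bf) (hg' : ∀ x, |deriv g x| ≤ Bg) (x : ℝ) :
    |deriv (fun y => f y * g y) x| ≤ A * (Bf + Bg) := by
  have hA : 0 ≤ A := (abs_nonneg _).trans (hfA x)
  have hBf : 0 ≤ Bf := (abs_nonneg _).trans (hf' x)
  rw [deriv_fun_mul (hf x) (hg x)]
  calc |deriv f x * g x + f x * deriv g x| ≤ |deriv f x| * |g x| + |f x| * |deriv g x| := by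
        rw [← abs_mul, ← abs_mul]; exact abs_add_le _ _
    _ ≤ Bf * A + A * Bg := by gcongr; exacts [hf' x, hgA x, hfA x, hg' x]
    _ = A * (Bf + Bg) := by ring

theorem abs_riemannSum_mul_sub_integral_le {f g : ℝ → ℝ} {A Bf Bg : ℝ}
    (hf : Differentiable ℝ f) (hg : Differentiable ℝ g) (hfA : ∀ x, |f x| ≤ A)
    (hgA : ∀ x, |g x| ≤ A) (hf' : ∀ x, |deriv f x| ≤ Bf) (hg' : ∀ x, |deriv g x| ≤ Bg) (n : ℕ) :
    |∑ j ∈ Icc 1 n, f (j / n) * g (j / n) - n * ∫ x in (0:ℝ)..1, f x * g x| ≤ A * (Bf + Bg) :=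
  abs_riemannSum_sub_integral_le (hf.mul hg) (abs_deriv_mul_le hf hg hfA hgA hf' hg') n

theorem abs_sum_sum_mul_le_mul_sq {ι : Type*} (s : Finset ι) (E : ι → ι → ℝ) (u w : ι → ℝ)
    {c : ℝ} (hE : ∀ i ∈ s, ∀ j ∈ s, |E i j| ≤ c * (w i * w j)) :
    |∑ i ∈ s, ∑ j ∈ s, u i * u j * E i j| ≤ c * (∑ i ∈ s, w i * |u i|) ^ 2 := by
  calc |∑ i ∈ s, ∑ j ∈ s, u i * u j * E i j| ≤ ∑ i ∈ s, ∑ j ∈ s, |u i * u j * E i j| :=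
        (abs_sum_le_sum_abs _ _).trans (sum_le_sum fun i _ => abs_sum_le_sum_abs _ _)
    _ ≤ ∑ i ∈ s, ∑ j ∈ s, c * ((w i * |u i|) * (w j * |u j|)) := by
        refine sum_le_sum fun i hi => sum_le_sum fun j hj => ?_
        calc |u i * u j * E i j| ≤ |u i| * |u j| * (c * (w i * w j)) := by
              rw [abs_mul, abs_mul]; gcongr; exact hE i hi j hj
          _ = c * ((w i * |u i|) * (w j * |u j|)) := by ring
    _ = c * (∑ i ∈ s, w i * |u i|) ^ 2 := by
        rw [sq, sum_mul_sum, mul_sum]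
        simp_rw [mul_sum]

theorem sq_sum_rpow_mul_abs_le {ι : Type*} (s : Finset ι) (x u : ι → ℝ)
    (hx : ∀ i ∈ s, 0 < x i) (a b : ℝ) :
    (∑ i ∈ s, x i ^ a * |u i|) ^ 2 ≤ (∑ i ∈ s, x i ^ (2 * a - b)) * ∑ i ∈ s, x i ^ b * u i ^ 2 := by
  refine sum_sq_le_sum_mul_sum_of_sq_le_mul s (fun i hi => (Real.rpow_pos_of_pos (hx i hi) _).le)
    (fun i hi => by have := (hx i hi).le; positivity) fun i hi => le_of_eq ?_
  rw [mul_pow, sq_abs, ← mul_assoc, ← Real.rpow_add (hx i hi), sub_add_cancel,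
    ← Real.rpow_natCast, ← Real.rpow_mul (hx i hi).le, mul_comm a]
  norm_num

theorem abs_sum_fin_mul_le_of_abs_le_rpow_add {E : ℕ → ℕ → ℝ} {M δ : ℝ} (hM : 0 ≤ M)
    (hδ : 0 ≤ δ) (hE : ∀ k ℓ : ℕ, 1 ≤ k → 1 ≤ ℓ → |E k ℓ| ≤ M * ((k:ℝ) ^ δ + (ℓ:ℝ) ^ δ))
    (p : ℕ) (u : Fin p → ℝ) (lam : ℝ) :
    |∑ k : Fin p, ∑ ℓ : Fin p, u k * u ℓ * E (k + 1) (ℓ + 1)|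
      ≤ 2 * M * (∑ k : Fin p, ((k:ℝ) + 1) ^ (2 * δ - lam))
          * ∑ k : Fin p, ((k:ℝ) + 1) ^ lam * u k ^ 2 := by
  have hE' : ∀ k ∈ (univ : Finset (Fin p)), ∀ ℓ ∈ (univ : Finset (Fin p)),
      |E (k + 1) (ℓ + 1)| ≤ 2 * M * (((k:ℝ) + 1) ^ δ * ((ℓ:ℝ) + 1) ^ δ) := by
    intro k _ ℓ _
    have hk1 := Real.one_le_rpow (le_add_of_nonneg_left (Nat.cast_nonneg' (k:ℕ))) hδ
    have hℓ1 := Real.one_le_rpow (le_add_of_nonneg_left (Nat.cast_nonneg' (ℓ:ℕ))) hδ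
    refine (hE _ _ le_add_self le_add_self).trans ?_
    push_cast
    -- `a + b ≤ 2ab` for `a, b ≥ 1`
    nlinarith [mul_nonneg hM (mul_nonneg (sub_nonneg.2 hk1) (sub_nonneg.2 hℓ1))]
  rw [mul_assoc]
  refine (abs_sum_sum_mul_le_mul_sq _ _ u _ hE').trans ?_
  gcongr
  exact sq_sum_rpow_mul_abs_le _ _ u (fun k _ => by positivity) δ lam

theorem sum_fin_add_one_rpow_le_tsum {q : ℝ} (hq : q < -1) (p : ℕ) :
    ∑ k : Fin p, ((k:ℝ) + 1) ^ q ≤ ∑' m : ℕ, ((m:ℝ) + 1) ^ q := by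
  have hsum : Summable fun m : ℕ => ((m:ℝ) + 1) ^ q := by
    simpa using (summable_nat_add_iff 1).2 (Real.summable_nat_rpow.2 hq)
  rw [Fin.sum_univ_eq_sum_range (fun m => ((m:ℝ) + 1) ^ q)]
  exact hsum.sum_le_tsum _ fun m _ => by positivity

/-- near-orthogonality of the discretized basis (Lemma on Riemann sums). -/
theorem near_orthogonal_discretized_basis
    (ψ : ℕ → ℝ → ℝ) (Ψ₀ Ψ₁ δ : ℝ) (hΨ₀ : 0 ≤ Ψ₀) (hΨ₁ : 0 ≤ Ψ₁) (hδ : 0 ≤ δ)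
    (hC1 : ∀ k : ℕ, 1 ≤ k → ContDiff ℝ 1 (ψ k))
    (hbdd : ∀ k : ℕ, 1 ≤ k → ∀ x : ℝ, |ψ k x| ≤ Ψ₀)
    (hder : ∀ k : ℕ, 1 ≤ k → ∀ x : ℝ, |deriv (ψ k) x| ≤ Ψ₁ * (k:ℝ) ^ δ)
    (hortho : ∀ k ℓ : ℕ, 1 ≤ k → 1 ≤ ℓ →
      (∫ x in (0:ℝ)..1, ψ k x * ψ ℓ x) = if k = ℓ then 1 else 0) :
    ∀ lam : ℝ, 1 + 2 * δ < lam →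
      ∃ C : ℝ, 0 < C ∧
        (∀ n p k ℓ : ℕ, 1 ≤ n → 1 ≤ k → k ≤ p → 1 ≤ ℓ → ℓ ≤ p →
          |(∑ j ∈ Finset.Icc 1 n, ψ k ((j:ℝ)/n) * ψ ℓ ((j:ℝ)/n))
              - (n:ℝ) * (if k = ℓ then 1 else 0)|
            ≤ C * ((k:ℝ) ^ lam + (ℓ:ℝ) ^ lam) / 2) ∧
        (∀ n p : ℕ, 1 ≤ n → ∀ u : Fin p → ℝ,
          |∑ k : Fin p, ∑ ℓ : Fin p, u k * u ℓ *
              ((∑ j ∈ Finset.Icc 1 n, ψ (k+1) ((j:ℝ)/n) * ψ (ℓ+1) ((j:ℝ)/n))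
                - (n:ℝ) * (if (k:ℕ) = (ℓ:ℕ) then 1 else 0))|
            ≤ C * ∑ k : Fin p, ((k:ℝ)+1) ^ lam * (u k) ^ 2) := by
  intro lam hlam
  set M := Ψ₀ * Ψ₁
  have hM : 0 ≤ M := mul_nonneg hΨ₀ hΨ₁
  have hgram : ∀ n k ℓ : ℕ, 1 ≤ k → 1 ≤ ℓ →
      |∑ j ∈ Icc 1 n, ψ k (j / n) * ψ ℓ (j / n) - n * (if k = ℓ then 1 else 0)|
        ≤ M * ((k:ℝ) ^ δ + (ℓ:ℝ) ^ δ) := by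
    intro n k ℓ hk hℓ
    have h := abs_riemannSum_mul_sub_integral_le ((hC1 k hk).differentiable one_ne_zero)
      ((hC1 ℓ hℓ).differentiable one_ne_zero) (hbdd k hk) (hbdd ℓ hℓ) (hder k hk) (hder ℓ hℓ) n
    rwa [hortho k ℓ hk hℓ, ← mul_add, ← mul_assoc] at h
  set S := ∑' m : ℕ, ((m:ℝ) + 1) ^ (2 * δ - lam)
  have hS : 0 ≤ S := tsum_nonneg fun m => by positivity
  refine ⟨2 * M * (S + 1) + 1, by positivity, fun n p k ℓ _ hk _ hℓ _ => ?_, fun n p _ u => ?_⟩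
  · have hδlam : δ ≤ lam := by linarith
    have hpos : 0 ≤ (k:ℝ) ^ lam + (ℓ:ℝ) ^ lam := by positivity
    calc _ ≤ M * ((k:ℝ) ^ δ + (ℓ:ℝ) ^ δ) := hgram n k ℓ hk hℓ
      _ ≤ M * ((k:ℝ) ^ lam + (ℓ:ℝ) ^ lam) := by
          gcongr; exacts [Nat.one_le_cast.2 hk, Nat.one_le_cast.2 hℓ]
      _ ≤ (2 * M * (S + 1) + 1) * ((k:ℝ) ^ lam + (ℓ:ℝ) ^ lam) / 2 := by
          nlinarith [mul_nonneg (mul_nonneg hM hS) hpos]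
  · have h := abs_sum_fin_mul_le_of_abs_le_rpow_add hM hδ (hgram n) p u lam
    simp only [add_left_inj] at h
    refine h.trans ?_
    gcongr
    calc 2 * M * ∑ k : Fin p, ((k:ℝ) + 1) ^ (2 * δ - lam) ≤ 2 * M * S := by
          gcongr; exact sum_fin_add_one_rpow_le_tsum (by linarith) p
      _ ≤ 2 * M * (S + 1) + 1 := by nlinarith
end

section
/- Let β, γ ≥ 0 with 2β + 2γ > 2, let n ≥ 2, set m = n^{1/(2β+2γ)}, and consider T(p) = ∑_{k=1}^p n/(n + k^{2β+2γ}). Then there exist constants 0 < c₁ < c₂ depending only on β, γ (not on n, p) such that c₁ · min(m, p) ≤ T(p) ≤ c₂ · min(m, p). -/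
/-- Telescoping bound: ∑_{k=K}^p 1/k² ≤ 2/K. -/
lemma sum_inv_sq_le (K : ℕ) (hK : 1 ≤ K) (p : ℕ) :
    ∑ k ∈ Finset.Icc K p, (1:ℝ)/(k:ℝ)^2 ≤ 2/K := by
  have hKpos : (0:ℝ) < K := by exact_mod_cast hK
  rcases le_or_gt K p with h | h
  · have main : ∀ q : ℕ, K ≤ q →
        ∑ k ∈ Finset.Icc K q, (1:ℝ)/(k:ℝ)^2 ≤ 2/K - 1/q := by
      intro q hq
      induction q, hq using Nat.le_induction with
      | base =>
          rw [Finset.Icc_self, Finset.sum_singleton]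
          have hK1 : (1:ℝ) ≤ (K:ℝ) := by exact_mod_cast hK
          have h1 : (1:ℝ)/(K:ℝ)^2 ≤ 1/K :=
            one_div_le_one_div_of_le hKpos (by nlinarith)
          have h2 : 2/(K:ℝ) - 1/K = 1/K := by ring
          linarith
      | succ q hq ih =>
          rw [Finset.sum_Icc_succ_top (by omega)]
          have hqpos : (0:ℝ) < q := by
            have : 1 ≤ q := le_trans hK hq
            exact_mod_cast this
          have hq1 : (0:ℝ) < (q:ℝ) + 1 := by linarith
          have key : (1:ℝ)/((q:ℝ)+1)^2 ≤ 1/q - 1/((q:ℝ)+1) := by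
            rw [div_sub_div _ _ (ne_of_gt hqpos) (ne_of_gt hq1)]
            rw [div_le_div_iff₀ (by positivity) (by positivity)]
            ring_nf
            nlinarith
          push_cast
          linarith [ih]
    have hppos : (0:ℝ) < p := lt_of_lt_of_le hKpos (by exact_mod_cast h)
    have := main p h
    have : (1:ℝ)/p ≥ 0 := by positivity
    linarith [main p h]
  · rw [Finset.Icc_eq_empty (by omega), Finset.sum_empty]
    positivity

/-- the effective-dimension sum T(p) = ∑_{k=1}^p n/(n + k^{2β+2γ})
is equivalent to min(m, p), where m = n^{1/(2β+2γ)}. -/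
theorem effective_dimension_sum_asymp
    (β γ : ℝ) (hβ : 0 ≤ β) (hγ : 0 ≤ γ) (hbg : 2 < 2*β + 2*γ) :
    ∃ c₁ c₂ : ℝ, 0 < c₁ ∧ c₁ < c₂ ∧
      ∀ n p : ℕ, 2 ≤ n → 1 ≤ p →
        c₁ * min ((n:ℝ) ^ ((1:ℝ)/(2*β + 2*γ))) (p:ℝ)
            ≤ ∑ k ∈ Finset.Icc 1 p, (n:ℝ) / ((n:ℝ) + (k:ℝ) ^ (2*β + 2*γ)) ∧
        ∑ k ∈ Finset.Icc 1 p, (n:ℝ) / ((n:ℝ) + (k:ℝ) ^ (2*β + 2*γ))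
            ≤ c₂ * min ((n:ℝ) ^ ((1:ℝ)/(2*β + 2*γ))) (p:ℝ) := by
  set s : ℝ := 2*β + 2*γ with hs_def
  have hs2 : (2:ℝ) < s := hbg
  have hs0 : (0:ℝ) < s := by linarith
  refine ⟨1/4, 4, by norm_num, by norm_num, ?_⟩
  intro n p hn hp
  set m : ℝ := (n:ℝ) ^ ((1:ℝ)/s) with hm_def
  have hn0 : (0:ℝ) < n := by positivity
  have hn1 : (1:ℝ) ≤ n := by exact_mod_cast le_trans (by norm_num) hn
  have hm0 : 0 < m := Real.rpow_pos_of_pos hn0 _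
  have hm1 : 1 ≤ m := by
    have h := Real.rpow_le_rpow zero_le_one hn1 (le_of_lt (div_pos one_pos hs0))
    rwa [Real.one_rpow] at h
  have hms : m ^ s = n := by
    rw [hm_def, ← Real.rpow_mul hn0.le, one_div_mul_cancel (ne_of_gt hs0),
      Real.rpow_one]
  have hterm_nonneg : ∀ k : ℕ, 0 ≤ (n:ℝ) / ((n:ℝ) + (k:ℝ) ^ s) := by
    intro k
    have : (0:ℝ) ≤ (k:ℝ) ^ s := Real.rpow_nonneg (Nat.cast_nonneg k) s
    positivity
  have hterm_le_one : ∀ k : ℕ, (n:ℝ) / ((n:ℝ) + (k:ℝ) ^ s) ≤ 1 := by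
    intro k
    have hk : (0:ℝ) ≤ (k:ℝ) ^ s := Real.rpow_nonneg (Nat.cast_nonneg k) s
    rw [div_le_one (by linarith)]
    linarith
  set M : ℝ := min m (p:ℝ) with hM_def
  have hp1 : (1:ℝ) ≤ (p:ℝ) := by exact_mod_cast hp
  have hM1 : 1 ≤ M := le_min hm1 hp1
  have hM0 : 0 < M := lt_of_lt_of_le one_pos hM1
  constructor
  · -- lower bound
    set K : ℕ := ⌊M⌋₊ with hK_def
    have hK1 : 1 ≤ K := Nat.le_floor (by exact_mod_cast hM1)
    have hKM : (K:ℝ) ≤ M := Nat.floor_le hM0.le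
    have hKp : K ≤ p := by
      have : (K:ℝ) ≤ (p:ℝ) := le_trans hKM (min_le_right _ _)
      exact_mod_cast this
    have hsub : Finset.Icc 1 K ⊆ Finset.Icc 1 p := by
      intro k hk
      simp only [Finset.mem_Icc] at hk ⊢
      omega
    have hstep1 : ∑ k ∈ Finset.Icc 1 K, (n:ℝ) / ((n:ℝ) + (k:ℝ) ^ s)
        ≤ ∑ k ∈ Finset.Icc 1 p, (n:ℝ) / ((n:ℝ) + (k:ℝ) ^ s) :=
      Finset.sum_le_sum_of_subset_of_nonneg hsub (fun k _ _ => hterm_nonneg k)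
    have hstep2 : (K:ℝ) * (1/2) ≤ ∑ k ∈ Finset.Icc 1 K, (n:ℝ) / ((n:ℝ) + (k:ℝ) ^ s) := by
      have hbound : ∀ k ∈ Finset.Icc 1 K, (1:ℝ)/2 ≤ (n:ℝ) / ((n:ℝ) + (k:ℝ) ^ s) := by
        intro k hk
        simp only [Finset.mem_Icc] at hk
        have hkm : (k:ℝ) ≤ m := by
          have : (k:ℝ) ≤ (K:ℝ) := by exact_mod_cast hk.2
          exact le_trans this (le_trans hKM (min_le_left _ _))
        have hks : (k:ℝ) ^ s ≤ (n:ℝ) := by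
          calc (k:ℝ) ^ s ≤ m ^ s :=
                Real.rpow_le_rpow (Nat.cast_nonneg k) hkm hs0.le
            _ = n := hms
        rw [le_div_iff₀ (by nlinarith [Real.rpow_nonneg (Nat.cast_nonneg k) s])]
        linarith
      calc (K:ℝ) * (1/2) = ∑ _k ∈ Finset.Icc 1 K, (1:ℝ)/2 := by
            rw [Finset.sum_const, Nat.card_Icc]
            simp [nsmul_eq_mul]
        _ ≤ _ := Finset.sum_le_sum hbound
    have hKhalf : M / 2 ≤ (K:ℝ) := by
      rcases le_or_gt M 2 with h | h
      · have : (1:ℝ) ≤ (K:ℝ) := by exact_mod_cast hK1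
        linarith
      · have := Nat.lt_floor_add_one M
        linarith
    calc (1/4 : ℝ) * M ≤ (K:ℝ) * (1/2) := by linarith
      _ ≤ _ := le_trans hstep2 hstep1
  · -- upper bound
    have hTp : ∑ k ∈ Finset.Icc 1 p, (n:ℝ) / ((n:ℝ) + (k:ℝ) ^ s) ≤ (p:ℝ) := by
      calc ∑ k ∈ Finset.Icc 1 p, (n:ℝ) / ((n:ℝ) + (k:ℝ) ^ s)
          ≤ ∑ _k ∈ Finset.Icc 1 p, (1:ℝ) :=
            Finset.sum_le_sum (fun k _ => hterm_le_one k)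
        _ = (p:ℝ) := by rw [Finset.sum_const, Nat.card_Icc]; simp
    have hTm : ∑ k ∈ Finset.Icc 1 p, (n:ℝ) / ((n:ℝ) + (k:ℝ) ^ s) ≤ 3 * m := by
      set K0 : ℕ := ⌊m⌋₊ with hK0_def
      have hK0m : (K0:ℝ) ≤ m := Nat.floor_le hm0.le
      have hmK0 : m < (K0:ℝ) + 1 := Nat.lt_floor_add_one m
      have hK01 : 1 ≤ K0 := Nat.le_floor (by exact_mod_cast hm1)
      rw [← Finset.sum_filter_add_sum_filter_not (Finset.Icc 1 p)
        (fun k : ℕ => (k:ℝ) ≤ m)]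
      have hA : ∑ k ∈ (Finset.Icc 1 p).filter (fun k : ℕ => (k:ℝ) ≤ m),
          (n:ℝ) / ((n:ℝ) + (k:ℝ) ^ s) ≤ m := by
        have hsubA : (Finset.Icc 1 p).filter (fun k : ℕ => (k:ℝ) ≤ m)
            ⊆ Finset.Icc 1 K0 := by
          intro k hk
          simp only [Finset.mem_filter, Finset.mem_Icc] at hk ⊢
          exact ⟨hk.1.1, Nat.le_floor hk.2⟩
        calc ∑ k ∈ (Finset.Icc 1 p).filter (fun k : ℕ => (k:ℝ) ≤ m),
              (n:ℝ) / ((n:ℝ) + (k:ℝ) ^ s)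
            ≤ ∑ _k ∈ (Finset.Icc 1 p).filter (fun k : ℕ => (k:ℝ) ≤ m), (1:ℝ) :=
              Finset.sum_le_sum (fun k _ => hterm_le_one k)
          _ = ((Finset.Icc 1 p).filter (fun k : ℕ => (k:ℝ) ≤ m)).card := by
              rw [Finset.sum_const]; simp
          _ ≤ ((Finset.Icc 1 K0).card : ℝ) := by
              exact_mod_cast Finset.card_le_card hsubA
          _ ≤ m := by rw [Nat.card_Icc]; simpa using hK0m
      have hB : ∑ k ∈ (Finset.Icc 1 p).filter (fun k : ℕ => ¬ (k:ℝ) ≤ m),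
          (n:ℝ) / ((n:ℝ) + (k:ℝ) ^ s) ≤ 2 * m := by
        have hbound : ∀ k ∈ (Finset.Icc 1 p).filter (fun k : ℕ => ¬ (k:ℝ) ≤ m),
            (n:ℝ) / ((n:ℝ) + (k:ℝ) ^ s) ≤ m^2 * ((1:ℝ)/(k:ℝ)^2) := by
          intro k hk
          simp only [Finset.mem_filter, Finset.mem_Icc, not_le] at hk
          have hmk : m < (k:ℝ) := hk.2
          have hk0 : (0:ℝ) < (k:ℝ) := lt_trans hm0 hmk
          have hks : (0:ℝ) < (k:ℝ) ^ s := Real.rpow_pos_of_pos hk0 s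
          have h1 : (n:ℝ) / ((n:ℝ) + (k:ℝ) ^ s) ≤ (n:ℝ) / (k:ℝ) ^ s :=
            div_le_div_of_nonneg_left hn0.le hks (by linarith)
          have h2 : (n:ℝ) / (k:ℝ) ^ s = (m / k) ^ s := by
            rw [Real.div_rpow hm0.le hk0.le, hms]
          have hmk1 : m / k ≤ 1 := by
            rw [div_le_one hk0]; linarith
          have h3 : (m / k) ^ s ≤ (m / k) ^ (2:ℝ) :=
            Real.rpow_le_rpow_of_exponent_ge (by positivity) hmk1 hs2.le
          have h4 : (m / k) ^ (2:ℝ) = m^2 * ((1:ℝ)/(k:ℝ)^2) := by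
            rw [show ((2:ℝ)) = ((2:ℕ):ℝ) by norm_num, Real.rpow_natCast, div_pow]
            ring
          calc (n:ℝ) / ((n:ℝ) + (k:ℝ) ^ s) ≤ (n:ℝ) / (k:ℝ) ^ s := h1
            _ = (m / k) ^ s := h2
            _ ≤ (m / k) ^ (2:ℝ) := h3
            _ = m^2 * ((1:ℝ)/(k:ℝ)^2) := h4
        have hsubB : (Finset.Icc 1 p).filter (fun k : ℕ => ¬ (k:ℝ) ≤ m)
            ⊆ Finset.Icc (K0+1) p := by
          intro k hk
          simp only [Finset.mem_filter, Finset.mem_Icc, not_le] at hk ⊢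
          refine ⟨?_, hk.1.2⟩
          have : (K0:ℝ) < (k:ℝ) := lt_of_le_of_lt hK0m hk.2
          have : K0 < k := by exact_mod_cast this
          omega
        calc ∑ k ∈ (Finset.Icc 1 p).filter (fun k : ℕ => ¬ (k:ℝ) ≤ m),
              (n:ℝ) / ((n:ℝ) + (k:ℝ) ^ s)
            ≤ ∑ k ∈ (Finset.Icc 1 p).filter (fun k : ℕ => ¬ (k:ℝ) ≤ m),
              m^2 * ((1:ℝ)/(k:ℝ)^2) := Finset.sum_le_sum hbound
          _ ≤ ∑ k ∈ Finset.Icc (K0+1) p, m^2 * ((1:ℝ)/(k:ℝ)^2) :=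
              Finset.sum_le_sum_of_subset_of_nonneg hsubB
                (fun k _ _ => by positivity)
          _ = m^2 * ∑ k ∈ Finset.Icc (K0+1) p, (1:ℝ)/(k:ℝ)^2 := by
              rw [Finset.mul_sum]
          _ ≤ m^2 * (2/((K0:ℝ)+1)) := by
              have := sum_inv_sq_le (K0+1) (by omega) p
              push_cast at this ⊢
              exact mul_le_mul_of_nonneg_left this (by positivity)
          _ ≤ 2 * m := by
              rw [mul_comm, div_mul_eq_mul_div, div_le_iff₀ (by positivity)]
              nlinarith [hm0.le, hmK0]
      linarith
    have h4M : 4 * M = min (4*m) (4*(p:ℝ)) := by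
      rcases min_cases m (p:ℝ) with ⟨h1, h2⟩ | ⟨h1, h2⟩ <;>
        · rw [hM_def, h1]
          rw [eq_comm, min_eq_iff]
          first
          | exact Or.inl ⟨rfl, by linarith⟩
          | exact Or.inr ⟨rfl, by linarith⟩
    rw [show (4:ℝ) * M = 4 * min m (p:ℝ) from rfl] at h4M ⊢
    rw [h4M]
    refine le_min (by linarith) (by linarith)
end
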